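/- The intersection of L1 = {(ab(cab)^n c, a(bc)^n abca) : n ∈ ℕ} and L2 = {((abc)^n, a(bca)^n) : n ∈ ℕ} is the singleton {(abcabc, abcabca)}. -/

import Mathlib

inductive C3 : Type
  | a | b | c
deriving DecidableEq

open C3

def wpow (w : List C3) (n : ℕ) : List C3 := (List.replicate n w).flatten

theorem length_wpow (w : List C3) (n : ℕ) : (wpow w n).length = n * w.length := by
  simp [wpow]

/-- Comparing lengths: `3n + 3 = 3m` in the first component and `2n + 5 = 3m + 1` in the second. -/
theorem eq_one_of_L1_pair_eq_L2_pair {n m : ℕ}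
    (h : ([a, b] ++ wpow [c, a, b] n ++ [c], [a] ++ wpow [b, c] n ++ [a, b, c, a]) =
      (wpow [a, b, c] m, [a] ++ wpow [b, c, a] m)) :
    n = 1 := by
  obtain ⟨h₁, h₂⟩ := Prod.mk.inj h
  have len₁ := congrArg List.length h₁
  have len₂ := congrArg List.length h₂
  simp only [List.length_append, length_wpow, List.length_cons, List.length_nil] at len₁ len₂
  omega

/-- L1 ∩ L2 = {(abcabc, abcabca)} where
L1 = {(ab(cab)^n c, a(bc)^n abca)} and L2 = {((abc)^n, a(bca)^n)}. -/
theorem L12_intersection :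
    {p : List C3 × List C3 | ∃ n : ℕ,
        p = ([a, b] ++ wpow [c, a, b] n ++ [c], [a] ++ wpow [b, c] n ++ [a, b, c, a])} ∩
    {p : List C3 × List C3 | ∃ n : ℕ,
        p = (wpow [a, b, c] n, [a] ++ wpow [b, c, a] n)} =
    {([a, b, c, a, b, c], [a, b, c, a, b, c, a])} := by
  ext p
  simp only [Set.mem_inter_iff, Set.mem_ofPred_eq, Set.mem_singleton_iff]
  constructor
  · rintro ⟨⟨n, rfl⟩, ⟨m, h⟩⟩
    obtain rfl := eq_one_of_L1_pair_eq_L2_pair h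
    rfl
  · rintro rfl
    exact ⟨⟨1, rfl⟩, ⟨2, rfl⟩⟩
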